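/- Let R be a commutative Frobenius ring of characteristic 2 and n odd. With X = [[AC, B],[BᵀC, Aᵀ]] for λ-circulant A, B and μ-circulant C (λ² = μ² = 1, C·Cᵀ = Iₙ), and G = (v 0 ξ₃ ξ₄ | I_{2n} X vᵀ vᵀ) the (2n+1)×(4n+2) matrix where v = (ξ₁,…,ξ₁,ξ₂,…,ξ₂), the matrix G satisfies G·Gᵀ = 0 if and only if: A·Aᵀ + B·Bᵀ = Iₙ, ξ₁² + ξ₂² + ξ₃² + ξ₄² = 0, and ξ_j·(ξ₃ + ξ₄ + 1) = 0 for j ∈ {1,2}. -/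
import Mathlib


open Matrix BigOperators

/-- The λ-circulant matrix generated by `a`. -/
def lamCirc {R : Type*} [CommRing R] (n : ℕ) [NeZero n] (lam : R) (a : ZMod n → R) :
    Matrix (ZMod n) (ZMod n) R :=
  Matrix.of fun i j => if i.val ≤ j.val then a (j - i) else lam * a (j - i)

section Helpers

variable {R : Type*} [CommRing R] (n : ℕ) [NeZero n] (lam : R)

/-- The weight appearing in entries of a λ-circulant. -/
def lamWt (i j : ZMod n) : R := if i.val ≤ j.val then 1 else lam

lemma lamCirc_apply (a : ZMod n → R) (i j : ZMod n) :
    lamCirc n lam a i j = lamWt n lam i j * a (j - i) := by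
  simp only [lamCirc, lamWt, Matrix.of_apply]
  split <;> simp

lemma val_sub_cases (i k : ZMod n) :
    (i.val ≤ k.val ∧ (k - i).val = k.val - i.val) ∨
    (k.val < i.val ∧ (k - i).val = k.val + n - i.val) := by
  rcases le_or_gt i.val k.val with h | h
  · left; exact ⟨h, by rw [ZMod.val_sub h]⟩
  · right
    refine ⟨h, ?_⟩
    have h1 : (k - i) + i = k := by ring
    have h2 := ZMod.val_add (k - i) i
    rw [h1] at h2
    have hk := ZMod.val_lt k
    have hi := ZMod.val_lt i
    have hd := ZMod.val_lt (k - i)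
    rcases lt_or_ge ((k - i).val + i.val) n with hlt | hge
    · rw [Nat.mod_eq_of_lt hlt] at h2; omega
    · have : (k - i).val + i.val - n < n := by omega
      rw [Nat.mod_eq_sub_mod hge, Nat.mod_eq_of_lt this] at h2
      omega

lemma lamWt_mul (i k j : ZMod n) :
    lamWt n lam i k * lamWt n lam k j =
      lamWt n lam i j * (if n ≤ (k - i).val + (j - k).val then lam else (1 : R)) := by
  have h1 := val_sub_cases n i k
  have h2 := val_sub_cases n k j
  have h3 := val_sub_cases n i j
  have hi := ZMod.val_lt i
  have hj := ZMod.val_lt j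
  have hk := ZMod.val_lt k
  unfold lamWt
  rcases h1 with ⟨h1a, h1b⟩ | ⟨h1a, h1b⟩ <;> rcases h2 with ⟨h2a, h2b⟩ | ⟨h2a, h2b⟩ <;>
    rcases h3 with ⟨h3a, h3b⟩ | ⟨h3a, h3b⟩ <;>
    simp only [h1b, h2b]
  all_goals
    try rw [if_pos h1a]
    try rw [if_neg (by omega : ¬ i.val ≤ k.val)]
    try rw [if_pos h2a]
    try rw [if_neg (by omega : ¬ k.val ≤ j.val)]
    try rw [if_pos h3a]
    try rw [if_neg (by omega : ¬ i.val ≤ j.val)]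
  all_goals try rw [if_pos (by omega : n ≤ _)]
  all_goals try rw [if_neg (by omega : ¬ n ≤ _)]
  all_goals try (exfalso; omega)
  all_goals ring

lemma lamCirc_mul_apply (a b : ZMod n → R) (i j : ZMod n) :
    (lamCirc n lam a * lamCirc n lam b) i j =
      lamWt n lam i j * ∑ k : ZMod n,
        (if n ≤ (k - i).val + (j - k).val then lam else 1) * (a (k - i) * b (j - k)) := by
  rw [Matrix.mul_apply, Finset.mul_sum]
  refine Finset.sum_congr rfl fun k _ => ?_
  rw [lamCirc_apply, lamCirc_apply]
  linear_combination (a (k - i) * b (j - k)) * lamWt_mul n lam i k j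

lemma lamCirc_mul_comm (a b : ZMod n → R) :
    lamCirc n lam a * lamCirc n lam b = lamCirc n lam b * lamCirc n lam a := by
  ext i j
  rw [lamCirc_mul_apply, lamCirc_mul_apply]
  congr 1
  refine Fintype.sum_equiv (Equiv.subLeft (i + j)) _ _ fun k => ?_
  have h1 : (i + j - k) - i = j - k := by ring
  have h2 : j - (i + j - k) = k - i := by ring
  simp only [Equiv.subLeft_apply, h1, h2]
  rw [Nat.add_comm]
  ring

/-- The function generating the transpose circulant. -/
def conjFun (lam : R) (a : ZMod n → R) : ZMod n → R :=
  fun d => if d = 0 then a 0 else lam * a (-d)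

lemma lamCirc_transpose (hlam : lam ^ 2 = 1) (a : ZMod n → R) :
    (lamCirc n lam a)ᵀ = lamCirc n lam (conjFun n lam a) := by
  ext i j
  rw [Matrix.transpose_apply, lamCirc_apply, lamCirc_apply, conjFun]
  rcases eq_or_ne j i with rfl | hne
  · simp [lamWt]
  · have hval : i.val ≠ j.val := fun h => hne (ZMod.val_injective n h).symm
    have hd : j - i ≠ 0 := sub_ne_zero.mpr hne
    rw [if_neg hd]
    have : i - j = -(j - i) := by ring
    rw [this]
    unfold lamWt
    rcases lt_or_gt_of_ne hval with h | h
    · rw [if_neg (by omega : ¬ j.val ≤ i.val), if_pos h.le]; ring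
    · rw [if_pos (by omega : j.val ≤ i.val), if_neg (by omega : ¬ i.val ≤ j.val)]
      linear_combination (-(a (-(j - i)))) * hlam

end Helpers

theorem bordered_construction_self_orthogonal_iff {R : Type*} [CommRing R] [CharP R 2]
    (n : ℕ) [NeZero n] (hn : Odd n)
    (lam mu : R) (hlam : lam ^ 2 = 1) (hmu : mu ^ 2 = 1)
    (a b c : ZMod n → R) (ξ₁ ξ₂ ξ₃ ξ₄ : R)
    (A B C : Matrix (ZMod n) (ZMod n) R)
    (hA : A = lamCirc n lam a) (hB : B = lamCirc n lam b) (hC : C = lamCirc n mu c)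
    (hCC : C * Cᵀ = 1)
    (v : ZMod n ⊕ ZMod n → R) (hv : v = Sum.elim (fun _ => ξ₁) (fun _ => ξ₂))
    (X : Matrix (ZMod n ⊕ ZMod n) (ZMod n ⊕ ZMod n) R)
    (hX : X = Matrix.fromBlocks (A * C) B (Bᵀ * C) Aᵀ)
    (G : Matrix (Unit ⊕ (ZMod n ⊕ ZMod n))
      ((ZMod n ⊕ ZMod n) ⊕ ((ZMod n ⊕ ZMod n) ⊕ Fin 2)) R)
    (hG : G = Matrix.of (Sum.elim
      (fun _ => Sum.elim v (Sum.elim (fun _ => 0) ![ξ₃, ξ₄]))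
      (fun i => Sum.elim (fun j => if i = j then 1 else 0)
        (Sum.elim (X i) (fun _ => v i))))) :
    G * Gᵀ = 0 ↔
      (A * Aᵀ + B * Bᵀ = 1 ∧
        ξ₁ ^ 2 + ξ₂ ^ 2 + ξ₃ ^ 2 + ξ₄ ^ 2 = 0 ∧
        ξ₁ * (ξ₃ + ξ₄ + 1) = 0 ∧ ξ₂ * (ξ₃ + ξ₄ + 1) = 0) := by
  have h2R : (2 : R) = 0 := by exact_mod_cast CharP.cast_eq_zero R 2
  have hn1 : (n : R) = 1 := by
    obtain ⟨m, hm⟩ := hn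
    rw [hm]
    push_cast
    linear_combination (m : R) * h2R
  -- commutation facts
  have hAT : Aᵀ = lamCirc n lam (conjFun n lam a) := by
    rw [hA]; exact lamCirc_transpose n lam hlam a
  have hBT : Bᵀ = lamCirc n lam (conjFun n lam b) := by
    rw [hB]; exact lamCirc_transpose n lam hlam b
  have hcomm1 : B * A = A * B := by rw [hA, hB]; exact lamCirc_mul_comm n lam b a
  have hcomm2 : Aᵀ * Bᵀ = Bᵀ * Aᵀ := by rw [hAT, hBT]; exact lamCirc_mul_comm n lam _ _
  have hcomm3 : Aᵀ * A = A * Aᵀ := by rw [hAT, hA]; exact lamCirc_mul_comm n lam _ _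
  have hcomm4 : Bᵀ * B = B * Bᵀ := by rw [hBT, hB]; exact lamCirc_mul_comm n lam _ _
  set M : Matrix (ZMod n) (ZMod n) R := A * Aᵀ + B * Bᵀ with hM
  have hmat2 : ∀ (Y : Matrix (ZMod n) (ZMod n) R), Y + Y = 0 := by
    intro Y; ext i j
    simp only [Matrix.add_apply, Matrix.zero_apply]
    linear_combination (Y i j) * h2R
  have hXX : X * Xᵀ = Matrix.fromBlocks M 0 0 M := by
    rw [hX]
    rw [Matrix.fromBlocks_transpose, Matrix.fromBlocks_multiply]
    have e11 : A * C * (A * C)ᵀ + B * Bᵀ = M := by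
      rw [Matrix.transpose_mul, ← Matrix.mul_assoc, Matrix.mul_assoc A C Cᵀ, hCC,
        Matrix.mul_one]
    have e12 : A * C * (Bᵀ * C)ᵀ + B * Aᵀᵀ = 0 := by
      rw [Matrix.transpose_mul, Matrix.transpose_transpose, ← Matrix.mul_assoc,
        Matrix.mul_assoc A C Cᵀ, hCC, Matrix.mul_one, Matrix.transpose_transpose, hcomm1]
      exact hmat2 _
    have e21 : Bᵀ * C * (A * C)ᵀ + Aᵀ * Bᵀ = 0 := by
      rw [Matrix.transpose_mul, ← Matrix.mul_assoc, Matrix.mul_assoc Bᵀ C Cᵀ, hCC,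
        Matrix.mul_one, hcomm2]
      exact hmat2 _
    have e22 : Bᵀ * C * (Bᵀ * C)ᵀ + Aᵀ * Aᵀᵀ = M := by
      rw [Matrix.transpose_mul, Matrix.transpose_transpose, ← Matrix.mul_assoc,
        Matrix.mul_assoc Bᵀ C Cᵀ, hCC, Matrix.mul_one, Matrix.transpose_transpose,
        hcomm3, hcomm4, hM, add_comm]
    rw [e11, e12, e21, e22]
  -- entries of G * Gᵀ
  have h00 : (G * Gᵀ) (Sum.inl ()) (Sum.inl ()) = ξ₁ ^ 2 + ξ₂ ^ 2 + ξ₃ ^ 2 + ξ₄ ^ 2 := by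
    rw [Matrix.mul_apply, Fintype.sum_sum_type, Fintype.sum_sum_type]
    simp only [hG, hv, Matrix.transpose_apply, Matrix.of_apply, Sum.elim_inl, Sum.elim_inr,
      Fintype.sum_sum_type, Fin.sum_univ_two, Matrix.cons_val_zero, Matrix.cons_val_one,
      Matrix.head_cons, Finset.sum_const, Finset.card_univ, ZMod.card, nsmul_eq_mul,
      mul_zero, zero_mul, Finset.sum_const_zero, add_zero, zero_add]
    linear_combination (ξ₁ * ξ₁ + ξ₂ * ξ₂) * hn1
  have h0r : ∀ q, (G * Gᵀ) (Sum.inl ()) (Sum.inr q) = v q * (1 + ξ₃ + ξ₄) := by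
    intro q
    rw [Matrix.mul_apply]
    rcases q with q | q <;>
      simp [hG, hv, Fintype.sum_sum_type, Fin.sum_univ_two, Finset.sum_ite_eq,
        Finset.sum_ite_eq', Matrix.transpose_apply] <;>
      ring
  have hr0 : ∀ p, (G * Gᵀ) (Sum.inr p) (Sum.inl ()) = v p * (1 + ξ₃ + ξ₄) := by
    intro p
    rw [Matrix.mul_apply]
    rcases p with p | p <;>
      simp [hG, hv, Fintype.sum_sum_type, Fin.sum_univ_two, Finset.sum_ite_eq,
        Finset.sum_ite_eq', Matrix.transpose_apply] <;>
      ring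
  have hrr : ∀ p q, (G * Gᵀ) (Sum.inr p) (Sum.inr q) =
      (if p = q then 1 else 0) + (X * Xᵀ) p q := by
    intro p q
    rw [Matrix.mul_apply, Matrix.mul_apply]
    have hvv : v p * v q + v p * v q = 0 := by linear_combination (v p * v q) * h2R
    rcases p with p | p <;> rcases q with q | q <;>
      simp [hG, Fintype.sum_sum_type, Fin.sum_univ_two, Finset.sum_ite_eq,
        Finset.sum_ite_eq', Matrix.transpose_apply] <;>
      linear_combination hvv
  constructor
  · intro h
    have hent : ∀ r s, (G * Gᵀ) r s = 0 := fun r s => by rw [h]; rfl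
    have hMeq : M = 1 := by
      ext i j
      have h1 := hent (Sum.inr (Sum.inl i)) (Sum.inr (Sum.inl j))
      rw [hrr, hXX] at h1
      simp only [Matrix.fromBlocks_apply₁₁, Sum.inl.injEq] at h1
      have : M i j + M i j = 0 := by
        have := hmat2 M
        have := congrFun (congrFun this i) j
        simpa using this
      rcases eq_or_ne i j with rfl | hij
      · rw [if_pos rfl] at h1
        rw [Matrix.one_apply_eq]
        linear_combination this - h1
      · rw [if_neg hij] at h1
        rw [Matrix.one_apply_ne hij]
        linear_combination h1
    refine ⟨hMeq, ?_, ?_, ?_⟩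
    · have := hent (Sum.inl ()) (Sum.inl ())
      rw [h00] at this; exact this
    · have := hent (Sum.inl ()) (Sum.inr (Sum.inl 0))
      rw [h0r, hv] at this
      simp only [Sum.elim_inl] at this
      linear_combination this
    · have := hent (Sum.inl ()) (Sum.inr (Sum.inr 0))
      rw [h0r, hv] at this
      simp only [Sum.elim_inr] at this
      linear_combination this
  · rintro ⟨h1, h2, h3, h4⟩
    have hw : ∀ p, v p * (1 + ξ₃ + ξ₄) = 0 := by
      intro p
      rw [hv]
      rcases p with p | p
      · simp only [Sum.elim_inl]; linear_combination h3
      · simp only [Sum.elim_inr]; linear_combination h4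
    ext r s
    rcases r with r | p <;> rcases s with s | q
    · rw [Matrix.zero_apply, h00]; exact h2
    · rw [Matrix.zero_apply, h0r]; exact hw q
    · rw [Matrix.zero_apply, hr0]; exact hw p
    · rw [Matrix.zero_apply, hrr, hXX, h1]
      rcases p with p | p <;> rcases q with q | q
      · simp only [Matrix.fromBlocks_apply₁₁, Sum.inl.injEq]
        rcases eq_or_ne p q with rfl | hpq
        · rw [if_pos rfl, Matrix.one_apply_eq]; linear_combination h2R
        · rw [if_neg hpq, Matrix.one_apply_ne hpq, add_zero]
      · simp [Matrix.fromBlocks_apply₁₂]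
      · simp [Matrix.fromBlocks_apply₂₁]
      · simp only [Matrix.fromBlocks_apply₂₂, Sum.inr.injEq]
        rcases eq_or_ne p q with rfl | hpq
        · rw [if_pos rfl, Matrix.one_apply_eq]; linear_combination h2R
        · rw [if_neg hpq, Matrix.one_apply_ne hpq, add_zero]
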